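/- Let X be a first-countable Hausdorff space and G a group of homeomorphisms of X such that the action of G on X is minimal and for every open set U ⊆ X the action of rist_G(U) on U is locally minimal. Then for all x, y ∈ X there exists a homeomorphism f of X (lying in the Ellis semigroup of G, i.e. a pointwise limit of elements of G) such that f · St⁰_G(x) · f⁻¹ = St⁰_G(y). In particular St⁰_G(x) and St⁰_G(y) are isomorphic as groups. -/
import Mathlib


open Filter Topology Set

variable {X : Type*} [TopologicalSpace X]

/-- The group structure on self-homeomorphisms of `X`, with `(f * g) x = f (g x)`. -/
instance Homeomorph.instGroupSelf : Group (X ≃ₜ X) where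
  mul f g := g.trans f
  one := Homeomorph.refl X
  inv := Homeomorph.symm
  mul_assoc _ _ _ := rfl
  one_mul _ := Homeomorph.ext fun _ => rfl
  mul_one _ := Homeomorph.ext fun _ => rfl
  inv_mul_cancel f := Homeomorph.ext fun x => f.symm_apply_apply x

/-- The orbit of `x` under a group `G` of homeomorphisms of `X`. -/
def orbitSet (G : Subgroup (X ≃ₜ X)) (x : X) : Set X := {z | ∃ g ∈ G, g x = z}

/-- The action of `G` on `X` is minimal: every orbit is dense. -/
def IsMinimalAction (G : Subgroup (X ≃ₜ X)) : Prop := ∀ x : X, Dense (orbitSet G x)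

/-- A set `S` of homeomorphisms acts minimally on `U`: for every `y ∈ U`, the intersection of
the `S`-orbit of `y` with `U` is dense in `U`. -/
def MinimalOn (S : Set (X ≃ₜ X)) (U : Set X) : Prop :=
  ∀ y ∈ U, U ⊆ closure ({z | ∃ g ∈ S, g y = z} ∩ U)

/-- A set `S` of homeomorphisms acts locally minimally on `U`: every point of `U` has an open
neighbourhood `W ⊆ U` in which the intersection of every `S`-orbit with `W` is dense. -/
def LocallyMinimalOn (S : Set (X ≃ₜ X)) (U : Set X) : Prop :=
  ∀ x ∈ U, ∃ W ⊆ U, IsOpen W ∧ x ∈ W ∧ MinimalOn S W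

/-- The rigid stabiliser of `U` in `G`: elements of `G` fixing `X \ U` pointwise. -/
def rist (G : Subgroup (X ≃ₜ X)) (U : Set X) : Set (X ≃ₜ X) :=
  {g | g ∈ G ∧ ∀ z ∉ U, g z = z}

/-- The neighbourhood stabiliser of `x` in `G`, as a set: elements of `G` fixing pointwise
some open neighbourhood of `x`. -/
def nbhdStab (G : Subgroup (X ≃ₜ X)) (x : X) : Set (X ≃ₜ X) :=
  {g | g ∈ G ∧ ∃ U : Set X, IsOpen U ∧ x ∈ U ∧ ∀ z ∈ U, g z = z}

/-- The stabiliser of `x` in `G`, as a subgroup of the homeomorphism group. -/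
def stabSub (G : Subgroup (X ≃ₜ X)) (x : X) : Subgroup (X ≃ₜ X) where
  carrier := {g | g ∈ G ∧ g x = x}
  one_mem' := ⟨G.one_mem, rfl⟩
  mul_mem' := by
    rintro a b ⟨haG, ha⟩ ⟨hbG, hb⟩
    exact ⟨G.mul_mem haG hbG, by show a (b x) = x; rw [hb, ha]⟩
  inv_mem' := by
    rintro a ⟨haG, ha⟩
    refine ⟨G.inv_mem haG, ?_⟩
    show a.symm x = x
    conv_lhs => rw [← ha]
    exact a.symm_apply_apply x

/-- The neighbourhood stabiliser of `x` in `G`, as a subgroup of the homeomorphism group. -/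
def nbhdStabSub (G : Subgroup (X ≃ₜ X)) (x : X) : Subgroup (X ≃ₜ X) where
  carrier := nbhdStab G x
  one_mem' := ⟨G.one_mem, Set.univ, isOpen_univ, trivial, fun _ _ => rfl⟩
  mul_mem' := by
    rintro a b ⟨haG, U, hU, hxU, ha⟩ ⟨hbG, V, hV, hxV, hb⟩
    refine ⟨G.mul_mem haG hbG, U ∩ V, hU.inter hV, ⟨hxU, hxV⟩, fun z hz => ?_⟩
    show a (b z) = z
    rw [hb z hz.2, ha z hz.1]
  inv_mem' := by
    rintro a ⟨haG, U, hU, hxU, ha⟩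
    refine ⟨G.inv_mem haG, U, hU, hxU, fun z hz => ?_⟩
    show a.symm z = z
    conv_lhs => rw [← ha z hz]
    exact a.symm_apply_apply z

section Aux

variable {X : Type*} [TopologicalSpace X]

@[simp] lemma Homeomorph.mul_apply' (f g : X ≃ₜ X) (z : X) : (f * g) z = f (g z) := rfl

lemma Homeomorph.inv_eq_symm (f : X ≃ₜ X) : f⁻¹ = f.symm := rfl

lemma rist_subset (G : Subgroup (X ≃ₜ X)) (U : Set X) : rist G U ⊆ (G : Set (X ≃ₜ X)) :=
  fun _ h => h.1

lemma rist_mono (G : Subgroup (X ≃ₜ X)) {U V : Set X} (h : U ⊆ V) : rist G U ⊆ rist G V :=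
  fun g hg => ⟨hg.1, fun z hz => hg.2 z fun hzU => hz (h hzU)⟩

lemma rist_inv (G : Subgroup (X ≃ₜ X)) {U : Set X} {g : X ≃ₜ X} (hg : g ∈ rist G U) :
    g.symm ∈ rist G U := by
  refine ⟨G.inv_mem hg.1, fun z hz => ?_⟩
  conv_lhs => rw [← hg.2 z hz]
  exact g.symm_apply_apply z

lemma rist_mul (G : Subgroup (X ≃ₜ X)) {U : Set X} {g h : X ≃ₜ X} (hg : g ∈ rist G U)
    (hh : h ∈ rist G U) : g * h ∈ rist G U := by
  refine ⟨G.mul_mem hg.1 hh.1, fun z hz => ?_⟩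
  show g (h z) = z
  rw [hh.2 z hz, hg.2 z hz]

lemma rist_maps (G : Subgroup (X ≃ₜ X)) {U : Set X} {g : X ≃ₜ X} (hg : g ∈ rist G U)
    {z : X} (hz : z ∈ U) : g z ∈ U := by
  by_contra hc
  have h1 : g (g z) = g z := hg.2 (g z) hc
  have := g.injective h1
  rw [this] at hc
  exact hc hz

lemma rist_symm_maps (G : Subgroup (X ≃ₜ X)) {U : Set X} {g : X ≃ₜ X} (hg : g ∈ rist G U)
    {z : X} (hz : z ∈ U) : g.symm z ∈ U :=
  rist_maps G (rist_inv G hg) hz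

/-- If `δ` is supported in `U` and `h` fixes `U` pointwise, they commute. -/
lemma rist_comm (G : Subgroup (X ≃ₜ X)) {U : Set X} {δ : X ≃ₜ X} (hδ : δ ∈ rist G U)
    (h : X ≃ₜ X) (hh : ∀ z ∈ U, h z = z) : δ * h = h * δ := by
  refine Homeomorph.ext fun z => ?_
  show δ (h z) = h (δ z)
  by_cases hz : z ∈ U
  · rw [hh z hz, hh (δ z) (rist_maps G hδ hz)]
  · have hhz : h z ∉ U := by
      intro hc
      have : h (h z) = h z := hh (h z) hc
      have h2 := h.injective this
      rw [h2] at hc; exact hz hc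
    rw [hδ.2 z hz, hδ.2 (h z) hhz]

/-- From `MinimalOn`: reach any open target meeting `W` from any point of `W`. -/
lemma MinimalOn.reach {S : Set (X ≃ₜ X)} {W : Set X} (hmin : MinimalOn S W) {u t : X}
    (hu : u ∈ W) (ht : t ∈ W) {T : Set X} (hT : IsOpen T) (htT : t ∈ T) :
    ∃ δ ∈ S, δ u ∈ T ∧ δ u ∈ W := by
  have h1 : t ∈ closure ({z | ∃ g ∈ S, g u = z} ∩ W) := hmin u hu ht
  rcases (mem_closure_iff.1 h1) T hT htT with ⟨w, hwT, ⟨⟨δ, hδS, hδu⟩, hwW⟩⟩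
  exact ⟨δ, hδS, by rw [hδu]; exact hwT, by rw [hδu]; exact hwW⟩

/-- An antitone basis of open neighbourhoods, starting with `univ`. -/
lemma exists_open_nhds_basis [FirstCountableTopology X] (x : X) :
    ∃ C : ℕ → Set X, (∀ n, IsOpen (C n)) ∧ (∀ n, x ∈ C n) ∧ (∀ m n, m ≤ n → C n ⊆ C m) ∧
      (∀ s ∈ 𝓝 x, ∃ n, C n ⊆ s) ∧ C 0 = Set.univ := by
  obtain ⟨B, hB⟩ := (𝓝 x).exists_antitone_basis
  refine ⟨fun n => Nat.rec Set.univ (fun m _ => interior (B m)) n, fun n => ?_, fun n => ?_,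
    fun m n hmn => ?_, fun s hs => ?_, rfl⟩
  · cases n with
    | zero => exact isOpen_univ
    | succ m => exact isOpen_interior
  · cases n with
    | zero => exact Set.mem_univ x
    | succ m => exact mem_interior_iff_mem_nhds.2 (hB.toHasBasis.mem_of_mem trivial)
  · cases m with
    | zero => exact fun z _ => Set.mem_univ z
    | succ m' => cases n with
      | zero => omega
      | succ n' => exact interior_mono (hB.antitone (by omega))
  · obtain ⟨n, -, hn⟩ := hB.toHasBasis.mem_iff.1 hs
    exact ⟨n + 1, Set.Subset.trans interior_subset hn⟩

end Aux
section Aux2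

variable {X : Type*} [TopologicalSpace X]

/-- The key "set swap" lemma. -/
lemma set_swap (G : Subgroup (X ≃ₜ X))
    (hrist : ∀ U : Set X, IsOpen U → LocallyMinimalOn (rist G U) U)
    {S M : Set X} (hM : MinimalOn (rist G S) M)
    {u v : X} (hu : u ∈ M) (hv : v ∈ M)
    {Uu Uv : Set X} (hUu : IsOpen Uu) (hUv : IsOpen Uv) (huU : u ∈ Uu) (hvU : v ∈ Uv)
    (hUvS : Uv ⊆ S) :
    ∃ (δ : X ≃ₜ X) (A' M' : Set X), δ ∈ rist G S ∧ IsOpen A' ∧ IsOpen M' ∧ u ∈ M' ∧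
      M' ⊆ A' ∧ A' ⊆ Uu ∧ MinimalOn (rist G A') M' ∧ (∀ z ∈ A', δ z ∈ Uv) ∧
      δ.symm v ∈ M' := by
  -- window `N` for `rist G Uv` at `v`
  obtain ⟨N, hNUv, hNopen, hvN, hNmin⟩ := hrist Uv hUv v hvU
  -- `τ ∈ rist G S` with `τ u ∈ N ∩ M`
  obtain ⟨τ, hτS, hτuN, hτuM⟩ := hM.reach hu hv hNopen hvN
  -- the new pair `(A', M')`
  set A' : Set X := Uu ∩ (⇑τ) ⁻¹' N with hA'def
  have hA'open : IsOpen A' := hUu.inter (hNopen.preimage τ.continuous)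
  have huA' : u ∈ A' := ⟨huU, hτuN⟩
  obtain ⟨M', hM'A, hM'open, huM', hM'min⟩ := hrist A' hA'open u huA'
  -- `σ ∈ rist G Uv` with `σ v ∈ τ '' M'`
  obtain ⟨σ, hσUv, hσvT, -⟩ := hNmin.reach hvN hτuN (τ.isOpenMap _ hM'open)
    (Set.mem_image_of_mem _ huM')
  refine ⟨σ⁻¹ * τ, A', M', rist_mul G (rist_inv G (rist_mono G hUvS hσUv)) hτS,
    hA'open, hM'open, huM', hM'A, Set.inter_subset_left, hM'min, fun z hz => ?_, ?_⟩
  · show σ.symm (τ z) ∈ Uv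
    exact rist_symm_maps G hσUv (hNUv hz.2)
  · obtain ⟨w, hwM', hw⟩ := hσvT
    have : (σ⁻¹ * τ) w = v := by
      show σ.symm (τ w) = v
      rw [hw]; exact σ.symm_apply_apply v
    have h2 : (σ⁻¹ * τ).symm v = w := by rw [← this]; exact Homeomorph.symm_apply_apply _ _
    rw [h2]; exact hwM'

end Aux2
section Aux3

variable {X : Type*} [TopologicalSpace X]

/-- The invariant carried along the construction. -/
structure ConjInv (G : Subgroup (X ≃ₜ X)) (x y : X) (Co Do : ℕ → Set X) (n : ℕ)
    (g : X ≃ₜ X) (A M : Set X) : Prop where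
  gG : g ∈ G
  openA : IsOpen A
  xM : x ∈ M
  MA : M ⊆ A
  ACo : A ⊆ Co n
  qM : g.symm y ∈ M
  VDo : ∀ z ∈ A, g z ∈ Do n
  minM : MinimalOn (rist G A) M

/-- The transition relation between consecutive stages. -/
structure ConjTr (G : Subgroup (X ≃ₜ X)) (g g' : X ≃ₜ X) (A : Set X) : Prop where
  e1 : ∀ z ∉ A, g' z = g z
  e2 : ∀ z ∈ A, ∃ w ∈ A, g' z = g w
  e3 : ∀ w : X, g.symm w ∉ A → g'.symm w = g.symm w
  e4 : ∀ w : X, g.symm w ∈ A → g'.symm w ∈ A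
  e5 : ∀ h : X ≃ₜ X, (∀ z ∈ A, h z = z) → g' * h * g'⁻¹ = g * h * g⁻¹
  e6 : ∀ k : X ≃ₜ X, (∀ z ∈ A, k (g z) = g z) → g'⁻¹ * k * g' = g⁻¹ * k * g

lemma conjTr_of_rist (G : Subgroup (X ≃ₜ X)) {g δ : X ≃ₜ X} {A : Set X}
    (hδ : δ ∈ rist G A) : ConjTr G g (g * δ) A := by
  constructor
  · intro z hz
    show g (δ z) = g z
    rw [hδ.2 z hz]
  · intro z hz
    exact ⟨δ z, rist_maps G hδ hz, rfl⟩
  · intro w hw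
    show δ.symm (g.symm w) = g.symm w
    exact (rist_inv G hδ).2 _ hw
  · intro w hw
    show δ.symm (g.symm w) ∈ A
    exact rist_symm_maps G hδ hw
  · intro h hh
    have hcomm : δ * h = h * δ := rist_comm G hδ h hh
    have : (g * δ) * h * (g * δ)⁻¹ = g * (δ * h * δ⁻¹) * g⁻¹ := by group
    rw [this, hcomm]; group
  · intro k hk
    have hfix : ∀ z ∈ A, (g⁻¹ * k * g) z = z := by
      intro z hz
      show g.symm (k (g z)) = z
      rw [hk z hz]; exact g.symm_apply_apply z
    have hcomm : δ * (g⁻¹ * k * g) = (g⁻¹ * k * g) * δ := rist_comm G hδ _ hfix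
    have h1 : (g * δ)⁻¹ * k * (g * δ) = δ⁻¹ * (g⁻¹ * k * g) * δ := by group
    rw [h1, mul_assoc δ⁻¹, ← hcomm]
    group

/-- Existence of the whole approximating sequence. -/
lemma exists_conj_seq (G : Subgroup (X ≃ₜ X)) (x y : X) (Co Do : ℕ → Set X)
    (hmin : IsMinimalAction G)
    (hrist : ∀ U : Set X, IsOpen U → LocallyMinimalOn (rist G U) U)
    (hCoOpen : ∀ n, IsOpen (Co n)) (hCox : ∀ n, x ∈ Co n) (hCo0 : Co 0 = Set.univ)
    (hDoOpen : ∀ n, IsOpen (Do n)) (hDoy : ∀ n, y ∈ Do n) (hDo0 : Do 0 = Set.univ) :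
    ∃ (gs : ℕ → X ≃ₜ X) (As Ms : ℕ → Set X),
      (∀ n, ConjInv G x y Co Do n (gs n) (As n) (Ms n)) ∧
      (∀ n, ConjTr G (gs n) (gs (n + 1)) (As n)) := by
  -- base state
  obtain ⟨M₀, hM₀C, hM₀open, hxM₀, hM₀min⟩ := hrist (Co 0) (hCoOpen 0) x (hCox 0)
  obtain ⟨w, ⟨⟨γ, hγG, hγy⟩, hwM₀⟩⟩ := (hmin y).exists_mem_open hM₀open ⟨x, hxM₀⟩
  have hbase : ConjInv G x y Co Do 0 γ⁻¹ (Co 0) M₀ := by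
    refine ⟨G.inv_mem hγG, hCoOpen 0, hxM₀, hM₀C, fun z hz => hz, ?_,
      fun z _ => by rw [hDo0]; exact Set.mem_univ _, hM₀min⟩
    show γ.symm.symm y ∈ M₀
    rw [Homeomorph.symm_symm, hγy]; exact hwM₀
  -- step
  have hstep : ∀ n (g : X ≃ₜ X) (A M : Set X), ConjInv G x y Co Do n g A M →
      ∃ (g' : X ≃ₜ X) (A' M' : Set X), ConjInv G x y Co Do (n + 1) g' A' M' ∧
        ConjTr G g g' A := by
    intro n g A M hI
    have hUuopen : IsOpen (A ∩ Co (n + 1)) := hI.openA.inter (hCoOpen (n + 1))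
    have hUvopen : IsOpen (A ∩ (⇑g) ⁻¹' (Do (n + 1))) :=
      hI.openA.inter ((hDoOpen (n + 1)).preimage g.continuous)
    have hvUv : g.symm y ∈ A ∩ (⇑g) ⁻¹' (Do (n + 1)) := by
      refine ⟨hI.MA hI.qM, ?_⟩
      show g (g.symm y) ∈ Do (n + 1)
      rw [g.apply_symm_apply]; exact hDoy (n + 1)
    obtain ⟨δ, A', M', hδ, hA'open, hM'open, hxM', hM'A', hA'Uu, hM'min, hδA', hδv⟩ :=
      set_swap G hrist hI.minM hI.xM hI.qM hUuopen hUvopen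
        ⟨hI.MA hI.xM, hCox (n + 1)⟩ hvUv Set.inter_subset_left
    refine ⟨g * δ, A', M', ?_, conjTr_of_rist G hδ⟩
    refine ⟨G.mul_mem hI.gG hδ.1, hA'open, hxM', hM'A',
      fun z hz => (hA'Uu hz).2, ?_, ?_, hM'min⟩
    · show δ.symm (g.symm y) ∈ M'
      exact hδv
    · intro z hz
      show g (δ z) ∈ Do (n + 1)
      exact (hδA' z hz).2
  -- build the sequence by recursion and choice
  classical
  let T := {p : (X ≃ₜ X) × Set X × Set X // ∀ n0 : ℕ, True}
  -- use a subtype indexed construction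
  let Rec : ∀ n : ℕ, {p : (X ≃ₜ X) × Set X × Set X //
      ConjInv G x y Co Do n p.1 p.2.1 p.2.2} := fun n =>
    Nat.rec ⟨⟨γ⁻¹, Co 0, M₀⟩, hbase⟩
      (fun m prev =>
        ⟨⟨(hstep m prev.1.1 prev.1.2.1 prev.1.2.2 prev.2).choose,
          (hstep m prev.1.1 prev.1.2.1 prev.1.2.2 prev.2).choose_spec.choose,
          (hstep m prev.1.1 prev.1.2.1 prev.1.2.2 prev.2).choose_spec.choose_spec.choose⟩,
          (hstep m prev.1.1 prev.1.2.1 prev.1.2.2 prev.2).choose_spec.choose_spec.choose_spec.1⟩)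
      n
  refine ⟨fun n => (Rec n).1.1, fun n => (Rec n).1.2.1, fun n => (Rec n).1.2.2,
    fun n => (Rec n).2, fun n => ?_⟩
  exact (hstep n (Rec n).1.1 (Rec n).1.2.1 (Rec n).1.2.2
    (Rec n).2).choose_spec.choose_spec.choose_spec.2

end Aux3
/-- the main theorem. -/
theorem nbhdStab_conjugate [FirstCountableTopology X] [T2Space X]
    (G : Subgroup (X ≃ₜ X)) (hmin : IsMinimalAction G)
    (hrist : ∀ U : Set X, IsOpen U → LocallyMinimalOn (rist G U) U)
    (x y : X) :
    ∃ f : X ≃ₜ X,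
      (∃ g : ℕ → X ≃ₜ X, (∀ i, g i ∈ G) ∧
        ∀ z : X, Tendsto (fun i => g i z) atTop (𝓝 (f z))) ∧
      (fun h => f * h * f⁻¹) '' nbhdStab G x = nbhdStab G y ∧
      Nonempty (↥(nbhdStabSub G x) ≃* ↥(nbhdStabSub G y)) := by
  classical
  obtain ⟨Co, hCoOpen, hCox, hCoAnti, hCoBasis, hCo0⟩ := exists_open_nhds_basis x
  obtain ⟨Do, hDoOpen, hDoy, hDoAnti, hDoBasis, hDo0⟩ := exists_open_nhds_basis y
  obtain ⟨gs, As, Ms, hInv, hTr⟩ :=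
    exists_conj_seq G x y Co Do hmin hrist hCoOpen hCox hCo0 hDoOpen hDoy hDo0
  -- basic membership facts
  have hxAs : ∀ n, x ∈ As n := fun n => (hInv n).MA (hInv n).xM
  have hqAs : ∀ n, (gs n).symm y ∈ As n := fun n => (hInv n).MA (hInv n).qM
  have hgsG : ∀ n, gs n ∈ G := fun n => (hInv n).gG
  have hgsxDo : ∀ n, gs n x ∈ Do n := fun n => (hInv n).VDo x (hxAs n)
  -- escape lemmas
  have hCoesc : ∀ z, z ≠ x → ∃ n, ∀ m, n ≤ m → z ∉ Co m := by
    intro z hz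
    obtain ⟨n, hn⟩ := hCoBasis {z}ᶜ (compl_singleton_mem_nhds fun h => hz h.symm)
    exact ⟨n, fun m hm hzm => hn (hCoAnti n m hm hzm) rfl⟩
  have hDoesc : ∀ w, w ≠ y → ∃ n, ∀ m, n ≤ m → w ∉ Do m := by
    intro w hw
    obtain ⟨n, hn⟩ := hDoBasis {w}ᶜ (compl_singleton_mem_nhds fun h => hw h.symm)
    exact ⟨n, fun m hm hwm => hn (hDoAnti n m hm hwm) rfl⟩
  -- freezing lemmas
  have hFF : ∀ (z : X) (n : ℕ), (∀ k, n ≤ k → z ∉ As k) → ∀ m, n ≤ m → gs m z = gs n z := by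
    intro z n hesc m hm
    induction m, hm using Nat.le_induction with
    | base => rfl
    | succ m hm ih => rw [(hTr m).e1 z (hesc m hm), ih]
  have hFB : ∀ (w : X) (n : ℕ), (∀ k, n ≤ k → (gs k).symm w ∉ As k) →
      ∀ m, n ≤ m → (gs m).symm w = (gs n).symm w := by
    intro w n hesc m hm
    induction m, hm using Nat.le_induction with
    | base => rfl
    | succ m hm ih => rw [(hTr m).e3 w (by rw [ih]; rw [← ih]; exact hesc m hm), ih]
  have hnotinA : ∀ (z : X) (k : ℕ), z ∉ Co k → z ∉ As k :=
    fun z k hz hzA => hz ((hInv k).ACo hzA)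
  have hnotinV : ∀ (w : X) (k : ℕ), w ∉ Do k → (gs k).symm w ∉ As k := by
    intro w k hw hc
    exact hw (by simpa [Homeomorph.apply_symm_apply] using (hInv k).VDo _ hc)
  -- the limit map and its inverse
  set fx : X → X := fun z =>
    if hz : ∃ n, ∀ m, n ≤ m → z ∉ Co m then gs hz.choose z else y with hfxdef
  set fi : X → X := fun w =>
    if hw : ∃ n, ∀ m, n ≤ m → w ∉ Do m then (gs hw.choose).symm w else x with hfidef
  have hfx_x : fx x = y := by
    rw [hfxdef]
    exact dif_neg fun ⟨n, hn⟩ => hn n le_rfl (hCox n)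
  have hfi_y : fi y = x := by
    rw [hfidef]
    exact dif_neg fun ⟨n, hn⟩ => hn n le_rfl (hDoy n)
  have hfx_far : ∀ (z : X) (n : ℕ), (∀ m, n ≤ m → z ∉ Co m) → fx z = gs n z := by
    intro z n hesc
    have hz : ∃ n, ∀ m, n ≤ m → z ∉ Co m := ⟨n, hesc⟩
    rw [hfxdef]
    simp only [dif_pos hz]
    have h1 := hFF z hz.choose (fun k hk => hnotinA z k (hz.choose_spec k hk))
      (max n hz.choose) (le_max_right _ _)
    have h2 := hFF z n (fun k hk => hnotinA z k (hesc k hk)) (max n hz.choose) (le_max_left _ _)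
    rw [← h1, h2]
  have hfi_far : ∀ (w : X) (n : ℕ), (∀ m, n ≤ m → w ∉ Do m) → fi w = (gs n).symm w := by
    intro w n hesc
    have hw : ∃ n, ∀ m, n ≤ m → w ∉ Do m := ⟨n, hesc⟩
    rw [hfidef]
    simp only [dif_pos hw]
    have h1 := hFB w hw.choose (fun k hk => hnotinV w k (hw.choose_spec k hk))
      (max n hw.choose) (le_max_right _ _)
    have h2 := hFB w n (fun k hk => hnotinV w k (hesc k hk)) (max n hw.choose) (le_max_left _ _)
    rw [← h1, h2]
  -- `fx z = gs m z` for all large `m`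
  have hfx_eventual : ∀ (z : X) (n : ℕ), (∀ m, n ≤ m → z ∉ Co m) →
      ∀ m, n ≤ m → fx z = gs m z := by
    intro z n hesc m hm
    exact hfx_far z m (fun k hk => hesc k (le_trans hm hk))
  have hfi_eventual : ∀ (w : X) (n : ℕ), (∀ m, n ≤ m → w ∉ Do m) →
      ∀ m, n ≤ m → fi w = (gs m).symm w := by
    intro w n hesc m hm
    exact hfi_far w m (fun k hk => hesc k (le_trans hm hk))
  -- non-hitting
  have hfx_ne : ∀ (z : X), z ≠ x → fx z ≠ y := by
    intro z hz hc
    obtain ⟨n, hesc⟩ := hCoesc z hz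
    have h1 : fx z = gs n z := hfx_far z n hesc
    have h2 : z = (gs n).symm y := by
      rw [← hc, h1, Homeomorph.symm_apply_apply]
    exact hesc n le_rfl (by rw [h2]; exact (hInv n).ACo (hqAs n))
  have hfi_ne : ∀ (w : X), w ≠ y → fi w ≠ x := by
    intro w hw hc
    obtain ⟨n, hesc⟩ := hDoesc w hw
    have h1 : fi w = (gs n).symm w := hfi_far w n hesc
    have h2 : w = gs n x := by
      rw [← hc, h1, Homeomorph.apply_symm_apply]
    exact hesc n le_rfl (by rw [h2]; exact hgsxDo n)
  -- inverses
  have hleft : ∀ z, fi (fx z) = z := by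
    intro z
    by_cases hz : z = x
    · rw [hz, hfx_x, hfi_y]
    · obtain ⟨n, hesc⟩ := hCoesc z hz
      obtain ⟨n₂, hesc₂⟩ := hDoesc (fx z) (hfx_ne z hz)
      have h1 : fx z = gs (max n n₂) z := hfx_eventual z n hesc _ (le_max_left _ _)
      have h2 : fi (fx z) = (gs (max n n₂)).symm (fx z) :=
        hfi_eventual (fx z) n₂ hesc₂ _ (le_max_right _ _)
      rw [h2, h1, Homeomorph.symm_apply_apply]
  have hright : ∀ w, fx (fi w) = w := by
    intro w
    by_cases hw : w = y
    · rw [hw, hfi_y, hfx_x]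
    · obtain ⟨n, hesc⟩ := hDoesc w hw
      obtain ⟨n₂, hesc₂⟩ := hCoesc (fi w) (hfi_ne w hw)
      have h1 : fi w = (gs (max n n₂)).symm w := hfi_eventual w n hesc _ (le_max_left _ _)
      have h2 : fx (fi w) = gs (max n n₂) (fi w) := hfx_eventual _ n₂ hesc₂ _ (le_max_right _ _)
      rw [h2, h1, Homeomorph.apply_symm_apply]
  -- image smallness: `fx (As n) ⊆ Do n` and `fi (gs n '' As n) ⊆ Co n`
  have himg : ∀ (n : ℕ) (z : X), z ∈ As n → fx z ∈ Do n := by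
    intro n z hzA
    by_cases hz : z = x
    · rw [hz, hfx_x]; exact hDoy n
    · obtain ⟨n₁, hesc⟩ := hCoesc z hz
      set n₁' := max n₁ n with hn₁'
      set K := Nat.findGreatest (fun k => z ∈ As k) n₁' with hK
      have hKn : n ≤ K := Nat.le_findGreatest (le_max_right _ _) hzA
      have hzK : z ∈ As K := by
        rw [hK]; exact Nat.findGreatest_spec (P := fun k => z ∈ As k) (le_max_right _ _) hzA
      have hout : ∀ k, K + 1 ≤ k → z ∉ As k := by
        intro k hk
        by_cases hkb : k ≤ n₁'
        · have hgt : Nat.findGreatest (fun k => z ∈ As k) n₁' < k := by rw [← hK]; omega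
          exact Nat.findGreatest_is_greatest hgt hkb
        · exact hnotinA z k (hesc k (by omega))
      have h1 : fx z = gs (K + 1) z := by
        have := hFF z (K + 1) hout
        obtain ⟨n₃, hesc₃⟩ := hCoesc z hz
        calc fx z = gs (max n₃ (K + 1)) z := hfx_eventual z n₃ hesc₃ _ (le_max_left _ _)
          _ = gs (K + 1) z := this _ (le_max_right _ _)
      obtain ⟨w, hwA, hw⟩ := (hTr K).e2 z hzK
      rw [h1, hw]
      exact hDoAnti n K hKn ((hInv K).VDo w hwA)
  have himgi : ∀ (n : ℕ) (w : X), w ∈ ⇑(gs n) '' As n → fi w ∈ Co n := by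
    intro n w hwV
    by_cases hw : w = y
    · rw [hw, hfi_y]; exact hCox n
    · obtain ⟨n₁, hesc⟩ := hDoesc w hw
      set n₁' := max n₁ n with hn₁'
      set K := Nat.findGreatest (fun k => (gs k).symm w ∈ As k) n₁' with hK
      have hwA : (gs n).symm w ∈ As n := by
        obtain ⟨z, hzA, hz⟩ := hwV
        rwa [← hz, Homeomorph.symm_apply_apply]
      have hKn : n ≤ K := Nat.le_findGreatest (le_max_right _ _) hwA
      have hzK : (gs K).symm w ∈ As K := by
        rw [hK]
        exact Nat.findGreatest_spec (P := fun k => (gs k).symm w ∈ As k) (le_max_right _ _) hwA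
      have hout : ∀ k, K + 1 ≤ k → (gs k).symm w ∉ As k := by
        intro k hk
        by_cases hkb : k ≤ n₁'
        · have hgt : Nat.findGreatest (fun k => (gs k).symm w ∈ As k) n₁' < k := by
            rw [← hK]; omega
          exact Nat.findGreatest_is_greatest hgt hkb
        · exact hnotinV w k (hesc k (by omega))
      have h1 : fi w = (gs (K + 1)).symm w := by
        have := hFB w (K + 1) hout
        obtain ⟨n₃, hesc₃⟩ := hDoesc w hw
        calc fi w = (gs (max n₃ (K + 1))).symm w :=
              hfi_eventual w n₃ hesc₃ _ (le_max_left _ _)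
          _ = (gs (K + 1)).symm w := this _ (le_max_right _ _)
      have h2 : (gs (K + 1)).symm w ∈ As K := (hTr K).e4 w hzK
      rw [h1]
      exact hCoAnti n K hKn ((hInv K).ACo h2)
  -- continuity of `fx`
  have hfx_cont : Continuous fx := by
    rw [continuous_iff_continuousAt]
    intro z
    by_cases hz : z = x
    · subst hz
      intro E hE
      rw [Filter.mem_map]
      obtain ⟨n, hn⟩ := hDoBasis E (by rwa [hfx_x] at hE)
      filter_upwards [(hInv n).openA.mem_nhds (hxAs n)] with z' hz'
      exact hn (himg n z' hz')
    · obtain ⟨O, E, hOopen, hEopen, hzO, hxE, hOE⟩ := t2_separation hz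
      obtain ⟨n, hn⟩ := hCoBasis E (hEopen.mem_nhds hxE)
      have heq : fx =ᶠ[𝓝 z] ⇑(gs n) := by
        filter_upwards [hOopen.mem_nhds hzO] with z' hz'
        refine hfx_far z' n fun m hm hc => ?_
        exact Set.disjoint_left.1 hOE hz' (hn (hCoAnti n m hm hc))
      exact ((gs n).continuous.continuousAt).congr heq.symm
  have hfi_cont : Continuous fi := by
    rw [continuous_iff_continuousAt]
    intro w
    by_cases hw : w = y
    · subst hw
      intro E hE
      rw [Filter.mem_map]
      obtain ⟨n, hn⟩ := hCoBasis E (by rwa [hfi_y] at hE)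
      have hVopen : IsOpen (⇑(gs n) '' As n) := (gs n).isOpen_image.2 (hInv n).openA
      have hyV : w ∈ ⇑(gs n) '' As n := by
        refine ⟨(gs n).symm w, hqAs n, Homeomorph.apply_symm_apply _ _⟩
      filter_upwards [hVopen.mem_nhds hyV] with w' hw'
      exact hn (himgi n w' hw')
    · obtain ⟨O, E, hOopen, hEopen, hwO, hyE, hOE⟩ := t2_separation hw
      obtain ⟨n, hn⟩ := hDoBasis E (hEopen.mem_nhds hyE)
      have heq : fi =ᶠ[𝓝 w] ⇑(gs n).symm := by
        filter_upwards [hOopen.mem_nhds hwO] with w' hw'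
        refine hfi_far w' n fun m hm hc => ?_
        exact Set.disjoint_left.1 hOE hw' (hn (hDoAnti n m hm hc))
      exact ((gs n).symm.continuous.continuousAt).congr heq.symm
  -- the homeomorphism
  set f : X ≃ₜ X := {
    toFun := fx
    invFun := fi
    left_inv := hleft
    right_inv := hright
    continuous_toFun := hfx_cont
    continuous_invFun := hfi_cont } with hfdef
  have hfapp : ∀ z, f z = fx z := fun z => rfl
  have hfsymm : ∀ w, f.symm w = fi w := fun w => rfl
  have hfinv : f⁻¹ = f.symm := rfl
  -- pointwise convergence
  have hconv : ∀ z : X, Tendsto (fun i => gs i z) atTop (𝓝 (f z)) := by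
    intro z
    by_cases hz : z = x
    · subst hz
      rw [hfapp, hfx_x]
      intro E hE
      rw [Filter.mem_map]
      obtain ⟨n, hn⟩ := hDoBasis E hE
      exact Filter.mem_of_superset (Filter.mem_atTop n)
        (fun m hm => hn (hDoAnti n m hm (hgsxDo m)))
    · obtain ⟨n, hesc⟩ := hCoesc z hz
      refine Filter.Tendsto.congr' ?_
        (tendsto_const_nhds : Tendsto (fun _ : ℕ => fx z) atTop (𝓝 (f z)))
      rw [Filter.EventuallyEq, Filter.eventually_atTop]
      exact ⟨n, fun m hm => hfx_eventual z n hesc m hm⟩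
  -- stabilization of conjugates
  have hconjF : ∀ (h : X ≃ₜ X) (n₁ : ℕ), (∀ z ∈ Co n₁, h z = z) →
      ∀ m, n₁ ≤ m → gs m * h * (gs m)⁻¹ = gs n₁ * h * (gs n₁)⁻¹ := by
    intro h n₁ hfix m hm
    induction m, hm using Nat.le_induction with
    | base => rfl
    | succ m hm ih =>
      rw [← ih]
      exact (hTr m).e5 h (fun z hz => hfix z (hCoAnti n₁ m hm ((hInv m).ACo hz)))
  have hconjB : ∀ (k : X ≃ₜ X) (n₂ : ℕ), (∀ w ∈ Do n₂, k w = w) →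
      ∀ m, n₂ ≤ m → (gs m)⁻¹ * k * gs m = (gs n₂)⁻¹ * k * gs n₂ := by
    intro k n₂ hfix m hm
    induction m, hm using Nat.le_induction with
    | base => rfl
    | succ m hm ih =>
      rw [← ih]
      exact (hTr m).e6 k (fun z hz => hfix _ (hDoAnti n₂ m hm ((hInv m).VDo z hz)))
  -- identities via limits
  have hlim : ∀ (h k : X ≃ₜ X) (n₀ : ℕ), (∀ m, n₀ ≤ m → ∀ z, gs m (h z) = k (gs m z)) →
      ∀ z, f (h z) = k (f z) := by
    intro h k n₀ hcomm z
    have t1 : Tendsto (fun i => gs i (h z)) atTop (𝓝 (f (h z))) := hconv (h z)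
    have t2 : Tendsto (fun i => k (gs i z)) atTop (𝓝 (k (f z))) :=
      (k.continuous.tendsto _).comp (hconv z)
    have t3 : Tendsto (fun i => gs i (h z)) atTop (𝓝 (k (f z))) := by
      refine t2.congr' ?_
      rw [Filter.EventuallyEq, Filter.eventually_atTop]
      exact ⟨n₀, fun m hm => (hcomm m hm z).symm⟩
    exact tendsto_nhds_unique t1 t3
  have hfxy : f x = y := hfx_x
  -- forward inclusion data
  have hFwd : ∀ h ∈ nbhdStab G x, f * h * f⁻¹ ∈ nbhdStab G y := by
    rintro h ⟨hG, U, hUo, hxU, hfixU⟩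
    obtain ⟨n₁, hn₁⟩ := hCoBasis U (hUo.mem_nhds hxU)
    set k₀ : X ≃ₜ X := gs n₁ * h * (gs n₁)⁻¹ with hk₀
    have hk₀G : k₀ ∈ G := G.mul_mem (G.mul_mem (hgsG n₁) hG) (G.inv_mem (hgsG n₁))
    have hcomm : ∀ m, n₁ ≤ m → ∀ z, gs m (h z) = k₀ (gs m z) := by
      intro m hm z
      have h1 : gs m * h * (gs m)⁻¹ = k₀ := hconjF h n₁ (fun z hz => hfixU z (hn₁ hz)) m hm
      calc gs m (h z) = (gs m * h * (gs m)⁻¹) (gs m z) := by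
            show gs m (h z) = gs m (h ((gs m).symm (gs m z)))
            rw [Homeomorph.symm_apply_apply]
        _ = k₀ (gs m z) := by rw [h1]
    have hident : ∀ z, f (h z) = k₀ (f z) := hlim h k₀ n₁ hcomm
    have heq : f * h * f⁻¹ = k₀ := by
      refine Homeomorph.ext fun w => ?_
      show f (h (f.symm w)) = k₀ w
      rw [hident (f.symm w), Homeomorph.apply_symm_apply]
    rw [heq]
    refine ⟨hk₀G, ⇑f '' U, f.isOpen_image.2 hUo, ⟨x, hxU, hfxy⟩, ?_⟩
    rintro w ⟨z, hzU, rfl⟩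
    rw [← hident z, hfixU z hzU]
  have hBwd : ∀ k ∈ nbhdStab G y, ∃ h ∈ nbhdStab G x, f * h * f⁻¹ = k := by
    rintro k ⟨kG, E, hEo, hyE, hfixE⟩
    obtain ⟨n₂, hn₂⟩ := hDoBasis E (hEo.mem_nhds hyE)
    set h₀ : X ≃ₜ X := (gs n₂)⁻¹ * k * gs n₂ with hh₀
    have hh₀G : h₀ ∈ G := G.mul_mem (G.mul_mem (G.inv_mem (hgsG n₂)) kG) (hgsG n₂)
    have hcomm : ∀ m, n₂ ≤ m → ∀ z, gs m (h₀ z) = k (gs m z) := by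
      intro m hm z
      have h1 : (gs m)⁻¹ * k * gs m = h₀ := hconjB k n₂ (fun w hw => hfixE w (hn₂ hw)) m hm
      have h2 : (gs m).symm (k (gs m z)) = h₀ z := by
        show ((gs m)⁻¹ * k * gs m) z = h₀ z
        rw [h1]
      rw [← h2, Homeomorph.apply_symm_apply]
    have hident : ∀ z, f (h₀ z) = k (f z) := hlim h₀ k n₂ hcomm
    have heq : f * h₀ * f⁻¹ = k := by
      refine Homeomorph.ext fun w => ?_
      show f (h₀ (f.symm w)) = k w
      rw [hident (f.symm w), Homeomorph.apply_symm_apply]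
    refine ⟨h₀, ⟨hh₀G, ⇑f ⁻¹' E, hEo.preimage f.continuous, ?_, ?_⟩, heq⟩
    · show f x ∈ E
      rw [hfxy]; exact hyE
    · intro z hzE
      have : f (h₀ z) = f z := by rw [hident z, hfixE _ hzE]
      exact f.injective this
  have hsetEq : (fun h => f * h * f⁻¹) '' nbhdStab G x = nbhdStab G y := by
    apply Set.Subset.antisymm
    · rintro k ⟨h, hh, rfl⟩
      exact hFwd h hh
    · intro k hk
      obtain ⟨h, hh, heq⟩ := hBwd k hk
      exact ⟨h, hh, heq⟩
  -- the group isomorphism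
  have hiso : Nonempty (↥(nbhdStabSub G x) ≃* ↥(nbhdStabSub G y)) := by
    refine ⟨{
      toFun := fun h => ⟨f * h.1 * f⁻¹, ?_⟩
      invFun := fun k => ⟨f⁻¹ * k.1 * f, ?_⟩
      left_inv := ?_
      right_inv := ?_
      map_mul' := ?_ }⟩
    · show f * h.1 * f⁻¹ ∈ nbhdStab G y
      rw [← hsetEq]
      exact ⟨h.1, h.2, rfl⟩
    · show f⁻¹ * k.1 * f ∈ nbhdStab G x
      have hk : k.1 ∈ nbhdStab G y := k.2
      rw [← hsetEq] at hk
      obtain ⟨h, hh, heq⟩ := hk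
      have : f⁻¹ * k.1 * f = h := by rw [← heq]; group
      rw [this]
      exact hh
    · intro h
      refine Subtype.ext ?_
      show f⁻¹ * (f * h.1 * f⁻¹) * f = h.1
      group
    · intro k
      refine Subtype.ext ?_
      show f * (f⁻¹ * k.1 * f) * f⁻¹ = k.1
      group
    · intro h₁ h₂
      refine Subtype.ext ?_
      show f * (h₁.1 * h₂.1) * f⁻¹ = (f * h₁.1 * f⁻¹) * (f * h₂.1 * f⁻¹)
      group
  exact ⟨f, ⟨gs, hgsG, hconv⟩, hsetEq, hiso⟩
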